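/- Let d : ℝ³ × ℝ → ℝ be continuously differentiable, let w : [0,T] → ℝ³ be any (not necessarily tangential) velocity, and let x : [0,T] → ℝ³ be differentiable with ∇ₓd(x(t),t) ≠ 0 for all t. Define the Lagrange multiplier λ(t) = ⟨∇ₓd(x(t),t), w(t)⟩ / ‖∇ₓd(x(t),t)‖². If x'(t) = V(t) ν(t) + w(t) − λ(t) ∇ₓd(x(t),t), where V(t) = −∂ₜd(x(t),t)/‖∇ₓd(x(t),t)‖ and ν(t) = ∇ₓd(x(t),t)/‖∇ₓd(x(t),t)‖, and d(x(0),0) = 0, then d(x(t),t) = 0 for all t ∈ [0,T]; that is, the constrained ALE velocity field v + w − λ ∇d, with this choice of λ, keeps points on the evolving surface even when w has a non-tangential component. -/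

import Mathlib

/-- The constrained ALE velocity field `v + w − λ ∇ₓd`, with Lagrange multiplier
`λ(t) = ⟨∇ₓd, w⟩/‖∇ₓd‖²`, keeps points on the evolving surface `Γ(t) = {y : d(y,t) = 0}`
even when the mesh-improving velocity `w` has a non-tangential component. -/
theorem node_stays_on_surface_constrained_ALE
    (T : ℝ) (hT : 0 < T)
    (d : EuclideanSpace ℝ (Fin 3) × ℝ → ℝ) (hd : ContDiff ℝ 1 d)
    (x : ℝ → EuclideanSpace ℝ (Fin 3))
    (w : ℝ → EuclideanSpace ℝ (Fin 3))
    (g : ℝ → EuclideanSpace ℝ (Fin 3))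
    (lam : ℝ → ℝ)
    (hg : ∀ t : ℝ, g t = gradient (fun y => d (y, t)) (x t))
    (hgne : ∀ t ∈ Set.Icc (0 : ℝ) T, g t ≠ 0)
    (hlam : ∀ t : ℝ, lam t = (inner ℝ (g t) (w t) : ℝ) / ‖g t‖ ^ 2)
    (hx : ∀ t ∈ Set.Icc (0 : ℝ) T,
      HasDerivAt x
        ((-(deriv (fun s => d (x t, s)) t) / ‖g t‖) • (‖g t‖⁻¹ • g t)
          + w t - lam t • g t) t)
    (h0 : d (x 0, 0) = 0) :
    ∀ t ∈ Set.Icc (0 : ℝ) T, d (x t, t) = 0 := by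
  -- the composed function is constant since its derivative vanishes
  have key : ∀ t ∈ Set.Icc (0 : ℝ) T, HasDerivAt (fun s => d (x s, s)) 0 t := by
    intro t ht
    set A := fderiv ℝ d (x t, t) with hA
    have hdA : HasFDerivAt d A (x t, t) := (hd.differentiable one_ne_zero (x t, t)).hasFDerivAt
    set x' := ((-(deriv (fun s => d (x t, s)) t) / ‖g t‖) • (‖g t‖⁻¹ • g t)
          + w t - lam t • g t) with hx'
    have hcurve : HasDerivAt (fun s => (x s, s)) (x', 1) t :=
      HasDerivAt.prodMk (hx t ht) (hasDerivAt_id t)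
    have hcomp : HasDerivAt (fun s => d (x s, s)) (A (x', 1)) t :=
      hdA.comp_hasDerivAt_of_eq t hcurve rfl
    -- time partial derivative
    have htime : HasDerivAt (fun s => d (x t, s)) (A (0, 1)) t := by
      have h1 : HasDerivAt (fun s : ℝ => ((x t : EuclideanSpace ℝ (Fin 3)), s)) (0, 1) t :=
        HasDerivAt.prodMk (hasDerivAt_const t (x t)) (hasDerivAt_id t)
      exact hdA.comp_hasDerivAt_of_eq t h1 rfl
    have hderivtime : deriv (fun s => d (x t, s)) t = A (0, 1) := htime.deriv
    -- space partial derivative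
    have hspace : ∀ v : EuclideanSpace ℝ (Fin 3), A (v, 0) = (inner ℝ (g t) v : ℝ) := by
      intro v
      have h1 : HasFDerivAt (fun y : EuclideanSpace ℝ (Fin 3) => (y, t))
          (ContinuousLinearMap.inl ℝ (EuclideanSpace ℝ (Fin 3)) ℝ) (x t) :=
        HasFDerivAt.prodMk (hasFDerivAt_id (x t)) (hasFDerivAt_const t (x t))
      have h2 : HasFDerivAt (fun y => d (y, t)) (A.comp (ContinuousLinearMap.inl ℝ _ ℝ)) (x t) :=
        hdA.comp (x t) h1
      have h3 : fderiv ℝ (fun y => d (y, t)) (x t) = A.comp (ContinuousLinearMap.inl ℝ _ ℝ) :=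
        h2.fderiv
      have h4 : (inner ℝ (g t) v : ℝ) = fderiv ℝ (fun y => d (y, t)) (x t) v := by
        rw [hg t]
        exact InnerProductSpace.toDual_symm_apply
      rw [h4, h3]
      rfl
    -- compute A (x', 1) = 0
    have hsplit : A (x', 1) = A (x', 0) + A (0, 1) := by
      rw [← map_add]; norm_num
    have hgn : ‖g t‖ ≠ 0 := norm_ne_zero_iff.mpr (hgne t ht)
    have hinner : (inner ℝ (g t) x' : ℝ) = -(A (0, 1)) := by
      rw [hx']
      simp only [inner_sub_right, inner_add_right, inner_smul_right, real_inner_self_eq_norm_sq]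
      rw [hlam t, hderivtime]
      field_simp
      ring
    have : A (x', 1) = 0 := by
      rw [hsplit, hspace x', hinner]; ring
    rwa [this] at hcomp
  intro t ht
  have := constant_of_has_deriv_right_zero
    (f := fun s => d (x s, s)) (a := 0) (b := T)
    (fun s hs => ((key s hs).continuousAt).continuousWithinAt)
    (fun s hs => ((key s (Set.mem_Icc_of_Ico hs)).hasDerivWithinAt)) t ht
  exact this.trans h0
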